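/- arXiv:2103.05934 — 4 statements merged into one kernel-verified Lean document; each statement's English description precedes it below -/
import Mathlib

section
/- Let I = [a,b] be a compact interval and let u, v : I → ℝ be two C² convex functions whose derivatives are uniformly bounded on I. Then ‖u' - v'‖²_{L²(I)} ≤ 8 (‖u'‖_{L^∞(I)} + ‖v'‖_{L^∞(I)})^{4/3} ‖u - v‖_{L²(I)}^{2/3}. -/
/-!
Write `w = u - v`, `M = max |w|` and `L = ‖u'‖_∞ + ‖v'‖_∞`. Integrating by parts,
`∫ w'² = [w w'] - ∫ w u'' + ∫ w v''`, and since `u'', v'' ≥ 0` the last two integrals are at most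
`M` times the total variation of `u'` and `v'`; hence `∫ w'² ≤ 4 L M`, and trivially
`∫ w'² ≤ L² (b - a)`. Conversely `w` is `L`-Lipschitz, so `|w| ≥ M / 2` on an interval of length
`min (b - a) (M / 2L)` around a maximum point, giving `∫ w² ≥ min (b - a) (M / 2L) M² / 4`.
Eliminating `M` and `b - a` yields `(∫ w'²)³ ≤ 512 L⁴ ∫ w²`.
-/

open Set MeasureTheory intervalIntegral

lemma pow_three_le_of_interpolation {A J L M D : ℝ} (hL : 0 ≤ L) (hM : 0 ≤ M) (hD : 0 ≤ D)
    (hA : 0 ≤ A) (hAM : A ≤ 4 * L * M) (hAD : A ≤ L ^ 2 * D)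
    (hJ : ∀ c, 0 ≤ c → c ≤ D → 2 * L * c ≤ M → c * M ^ 2 / 4 ≤ J) :
    A ^ 3 ≤ 512 * L ^ 4 * J := by
  have hJ0 : 0 ≤ J := by simpa using hJ 0 le_rfl hD (by simpa using hM)
  rcases hL.eq_or_lt with rfl | hL
  · have : A = 0 := le_antisymm (by simpa using hAM) hA
    simp [this]
  have hA2 : A ^ 2 ≤ (4 * L * M) ^ 2 := pow_le_pow_left₀ hA hAM 2
  by_cases hDM : 2 * L * D ≤ M
  · have h := hJ D hD le_rfl hDM
    calc A ^ 3 = A ^ 2 * A := by ring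
      _ ≤ (4 * L * M) ^ 2 * (L ^ 2 * D) := mul_le_mul hA2 hAD hA (sq_nonneg _)
      _ = 64 * L ^ 4 * (D * M ^ 2 / 4) := by ring
      _ ≤ 512 * L ^ 4 * J := by nlinarith [pow_pos hL 4]
  · replace hDM := (not_le.1 hDM).le
    have h := hJ (M / (2 * L)) (by positivity) (by rw [div_le_iff₀ (by positivity)]; linarith)
      (by rw [mul_div_cancel₀ _ (by positivity)])
    have hM3 : M ^ 3 ≤ 8 * L * J := by
      rw [div_mul_eq_mul_div, div_div, div_le_iff₀ (by positivity)] at h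
      nlinarith
    calc A ^ 3 ≤ (4 * L * M) ^ 3 := pow_le_pow_left₀ hA hAM 3
      _ = 64 * L ^ 3 * M ^ 3 := by ring
      _ ≤ 64 * L ^ 3 * (8 * L * J) := by gcongr
      _ = 512 * L ^ 4 * J := by ring

lemma le_mul_rpow_of_pow_three_le {A L J : ℝ} (hL : 0 ≤ L) (hJ : 0 ≤ J)
    (h : A ^ 3 ≤ 512 * L ^ 4 * J) :
    A ≤ 8 * L ^ ((4 : ℝ) / 3) * J ^ ((1 : ℝ) / 3) := by
  have hcube : (8 * L ^ ((4 : ℝ) / 3) * J ^ ((1 : ℝ) / 3)) ^ 3 = 512 * L ^ 4 * J := by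
    rw [mul_pow, mul_pow, ← Real.rpow_natCast (L ^ _), ← Real.rpow_natCast (J ^ _),
      ← Real.rpow_mul hL, ← Real.rpow_mul hJ]
    norm_num
  exact le_of_pow_le_pow_left₀ three_ne_zero (by positivity) (hcube ▸ h)

section Interpolation

variable {a b : ℝ}

lemma abs_integral_mul_deriv_le {w g g' : ℝ → ℝ} {M : ℝ} (hab : a ≤ b)
    (hg : ∀ x ∈ Icc a b, HasDerivWithinAt g (g' x) (Icc a b) x)
    (hg'int : IntervalIntegrable g' volume a b) (hg'0 : ∀ x ∈ Icc a b, 0 ≤ g' x)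
    (hw : ContinuousOn w (Icc a b)) (hwM : ∀ x ∈ Icc a b, |w x| ≤ M) :
    |∫ x in a..b, w x * g' x| ≤ M * (g b - g a) := by
  have hwg' : IntervalIntegrable (fun x => w x * g' x) volume a b :=
    hg'int.continuousOn_mul (uIcc_of_le hab ▸ hw)
  have hftc : ∫ x in a..b, g' x = g b - g a :=
    integral_eq_sub_of_hasDerivAt_of_le hab (fun x hx => (hg x hx).continuousWithinAt)
      (fun x hx => (hg x (Ioo_subset_Icc_self hx)).hasDerivAt (Icc_mem_nhds hx.1 hx.2)) hg'int
  calc |∫ x in a..b, w x * g' x| ≤ ∫ x in a..b, |w x * g' x| :=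
        abs_integral_le_integral_abs hab
    _ ≤ ∫ x in a..b, M * g' x := by
        refine integral_mono_on hab hwg'.abs (hg'int.const_mul M) fun x hx => ?_
        rw [abs_mul, abs_of_nonneg (hg'0 x hx)]
        exact mul_le_mul_of_nonneg_right (hwM x hx) (hg'0 x hx)
    _ = M * (g b - g a) := by rw [intervalIntegral.integral_const_mul, hftc]

lemma integral_sq_sub_le_of_deriv_nonneg {w f g f' g' : ℝ → ℝ} {M K₁ K₂ : ℝ} (hab : a ≤ b)
    (hw : ∀ x ∈ Icc a b, HasDerivWithinAt w (f x - g x) (Icc a b) x)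
    (hf : ∀ x ∈ Icc a b, HasDerivWithinAt f (f' x) (Icc a b) x)
    (hg : ∀ x ∈ Icc a b, HasDerivWithinAt g (g' x) (Icc a b) x)
    (hf'int : IntervalIntegrable f' volume a b) (hg'int : IntervalIntegrable g' volume a b)
    (hf'0 : ∀ x ∈ Icc a b, 0 ≤ f' x) (hg'0 : ∀ x ∈ Icc a b, 0 ≤ g' x)
    (hwM : ∀ x ∈ Icc a b, |w x| ≤ M)
    (hfK : ∀ x ∈ Icc a b, |f x| ≤ K₁) (hgK : ∀ x ∈ Icc a b, |g x| ≤ K₂) :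
    ∫ x in a..b, (f x - g x) ^ 2 ≤ 4 * (K₁ + K₂) * M := by
  have ha : a ∈ Icc a b := left_mem_Icc.2 hab
  have hb : b ∈ Icc a b := right_mem_Icc.2 hab
  have hM : 0 ≤ M := (abs_nonneg _).trans (hwM a ha)
  have hwc : ContinuousOn w (Icc a b) := fun x hx => (hw x hx).continuousWithinAt
  have hfg : ∀ x ∈ Icc a b, HasDerivWithinAt (fun y => f y - g y) (f' x - g' x) (Icc a b) x :=
    fun x hx => (hf x hx).sub (hg x hx)
  have hibp : ∫ x in a..b, (f x - g x) ^ 2 = w b * (f b - g b) - w a * (f a - g a) -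
      ((∫ x in a..b, w x * f' x) - ∫ x in a..b, w x * g' x) := by
    rw [← integral_sub (hf'int.continuousOn_mul (uIcc_of_le hab ▸ hwc))
      (hg'int.continuousOn_mul (uIcc_of_le hab ▸ hwc))]
    rw [← uIcc_of_le hab] at hw hfg
    have := integral_mul_deriv_eq_deriv_mul_of_hasDerivWithinAt hw hfg
      (ContinuousOn.intervalIntegrable fun x hx => (hfg x hx).continuousWithinAt)
      (hf'int.sub hg'int)
    simp only [sq, ← mul_sub]
    linarith
  have hboundary : ∀ x ∈ Icc a b, |w x * (f x - g x)| ≤ M * (K₁ + K₂) := fun x hx =>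
    calc |w x * (f x - g x)| = |w x| * |f x - g x| := abs_mul _ _
      _ ≤ M * (K₁ + K₂) := mul_le_mul (hwM x hx)
          ((abs_sub _ _).trans (add_le_add (hfK x hx) (hgK x hx))) (abs_nonneg _) hM
  have hf'w : |∫ x in a..b, w x * f' x| ≤ M * (2 * K₁) :=
    (abs_integral_mul_deriv_le hab hf hf'int hf'0 hwc hwM).trans (mul_le_mul_of_nonneg_left
      (by linarith [abs_le.1 (hfK a ha), abs_le.1 (hfK b hb)]) hM)
  have hg'w : |∫ x in a..b, w x * g' x| ≤ M * (2 * K₂) :=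
    (abs_integral_mul_deriv_le hab hg hg'int hg'0 hwc hwM).trans (mul_le_mul_of_nonneg_left
      (by linarith [abs_le.1 (hgK a ha), abs_le.1 (hgK b hb)]) hM)
  rw [hibp]
  linarith [abs_le.1 (hboundary a ha), abs_le.1 (hboundary b hb), abs_le.1 hf'w, abs_le.1 hg'w]

lemma mul_sq_le_integral_sq {w : ℝ → ℝ} {L c x₀ : ℝ} (hab : a ≤ b)
    (hw : ContinuousOn w (Icc a b)) (hx₀ : x₀ ∈ Icc a b) (hL : 0 ≤ L)
    (hlip : ∀ x ∈ Icc a b, |w x - w x₀| ≤ L * |x - x₀|)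
    (hc : 0 ≤ c) (hcab : c ≤ b - a) (hLc : 2 * L * c ≤ |w x₀|) :
    c * |w x₀| ^ 2 / 4 ≤ ∫ x in a..b, w x ^ 2 := by
  obtain ⟨p, hap, hpb, hpx₀, hx₀p⟩ : ∃ p, a ≤ p ∧ p + c ≤ b ∧ p ≤ x₀ ∧ x₀ ≤ p + c := by
    refine ⟨min x₀ (b - c), le_min hx₀.1 (by linarith), ?_, min_le_left _ _, ?_⟩ <;>
      rcases min_cases x₀ (b - c) with h | h <;> linarith [hx₀.2]
  have hlarge : ∀ x ∈ Icc p (p + c), |w x₀| ^ 2 / 4 ≤ w x ^ 2 := by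
    intro x hx
    have hx' : x ∈ Icc a b := ⟨hap.trans hx.1, hx.2.trans hpb⟩
    have hnear : |x - x₀| ≤ c := abs_le.2 ⟨by linarith [hx.1], by linarith [hx.2]⟩
    have hhalf : |w x₀| / 2 ≤ |w x| := by
      have : |w x₀| - |w x| ≤ L * c :=
        calc |w x₀| - |w x| ≤ |w x - w x₀| := by
              rw [abs_sub_comm]; exact abs_sub_abs_le_abs_sub _ _
          _ ≤ L * |x - x₀| := hlip x hx'
          _ ≤ L * c := mul_le_mul_of_nonneg_left hnear hL
      linarith
    calc |w x₀| ^ 2 / 4 = (|w x₀| / 2) ^ 2 := by ring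
      _ ≤ |w x| ^ 2 := pow_le_pow_left₀ (by positivity) hhalf 2
      _ = w x ^ 2 := sq_abs _
  have hsq : ContinuousOn (fun x => w x ^ 2) (Icc a b) := hw.pow 2
  calc c * |w x₀| ^ 2 / 4 = ∫ _ in p..p + c, |w x₀| ^ 2 / 4 := by
        rw [intervalIntegral.integral_const, smul_eq_mul]; ring
    _ ≤ ∫ x in p..p + c, w x ^ 2 :=
        integral_mono_on (by linarith) intervalIntegrable_const
          ((hsq.mono (Icc_subset_Icc hap hpb)).intervalIntegrable_of_Icc (by linarith))
          hlarge
    _ ≤ ∫ x in a..b, w x ^ 2 :=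
        integral_mono_interval hap (by linarith) hpb
          (Filter.Eventually.of_forall fun x => sq_nonneg (w x))
          (hsq.intervalIntegrable_of_Icc hab)

theorem integral_sq_sub_le_rpow_integral_sq {K₁ K₂ : ℝ} {w f g f' g' : ℝ → ℝ} (hab : a ≤ b)
    (hw : ∀ x ∈ Icc a b, HasDerivWithinAt w (f x - g x) (Icc a b) x)
    (hf : ∀ x ∈ Icc a b, HasDerivWithinAt f (f' x) (Icc a b) x)
    (hg : ∀ x ∈ Icc a b, HasDerivWithinAt g (g' x) (Icc a b) x)
    (hf'int : IntervalIntegrable f' volume a b) (hg'int : IntervalIntegrable g' volume a b)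
    (hf'0 : ∀ x ∈ Icc a b, 0 ≤ f' x) (hg'0 : ∀ x ∈ Icc a b, 0 ≤ g' x)
    (hfK : ∀ x ∈ Icc a b, |f x| ≤ K₁) (hgK : ∀ x ∈ Icc a b, |g x| ≤ K₂) :
    ∫ x in a..b, (f x - g x) ^ 2 ≤
      8 * (K₁ + K₂) ^ ((4 : ℝ) / 3) * (∫ x in a..b, w x ^ 2) ^ ((1 : ℝ) / 3) := by
  have ha : a ∈ Icc a b := left_mem_Icc.2 hab
  have hwc : ContinuousOn w (Icc a b) := fun x hx => (hw x hx).continuousWithinAt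
  have hfgc : ContinuousOn (fun x => f x - g x) (Icc a b) := fun x hx =>
    ((hf x hx).sub (hg x hx)).continuousWithinAt
  have hL : 0 ≤ K₁ + K₂ :=
    add_nonneg ((abs_nonneg _).trans (hfK a ha)) ((abs_nonneg _).trans (hgK a ha))
  have hfgK : ∀ x ∈ Icc a b, |f x - g x| ≤ K₁ + K₂ := fun x hx =>
    (abs_sub _ _).trans (add_le_add (hfK x hx) (hgK x hx))
  obtain ⟨x₀, hx₀, hmax⟩ := isCompact_Icc.exists_isMaxOn (nonempty_Icc.2 hab) hwc.abs
  have hlip : ∀ x ∈ Icc a b, |w x - w x₀| ≤ (K₁ + K₂) * |x - x₀| := fun x hx => by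
    simpa only [Real.norm_eq_abs] using (convex_Icc a b).norm_image_sub_le_of_norm_hasDerivWithin_le
      hw (by simpa only [Real.norm_eq_abs] using hfgK) hx₀ hx
  have hAM := integral_sq_sub_le_of_deriv_nonneg hab hw hf hg hf'int hg'int hf'0 hg'0
    (fun x hx => hmax hx) hfK hgK
  have hAD : ∫ x in a..b, (f x - g x) ^ 2 ≤ (K₁ + K₂) ^ 2 * (b - a) := by
    calc ∫ x in a..b, (f x - g x) ^ 2 ≤ ∫ _ in a..b, (K₁ + K₂) ^ 2 :=
          integral_mono_on hab ((hfgc.pow 2).intervalIntegrable_of_Icc hab)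
            intervalIntegrable_const fun x hx => sq_le_sq' (abs_le.1 (hfgK x hx)).1
              (abs_le.1 (hfgK x hx)).2
      _ = (K₁ + K₂) ^ 2 * (b - a) := by rw [intervalIntegral.integral_const, smul_eq_mul, mul_comm]
  exact le_mul_rpow_of_pow_three_le hL (integral_nonneg hab fun x _ => sq_nonneg (w x))
    (pow_three_le_of_interpolation hL (abs_nonneg _) (sub_nonneg.2 hab)
      (integral_nonneg hab fun x _ => sq_nonneg _) hAM hAD
      fun c hc hcD hcM => mul_sq_le_integral_sq hab hwc hx₀ hL hlip hc hcD hcM)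

/-- `deriv f` carries no information at the endpoints, so the bound is carried over from the
interior by continuity of the one-sided derivative. -/
lemma abs_derivWithin_Icc_le {f : ℝ → ℝ} {K : ℝ} (hab : a < b)
    (hf : ContDiffOn ℝ 1 f (Icc a b)) (hK : ∀ x ∈ Ioo a b, |deriv f x| ≤ K) :
    ∀ x ∈ Icc a b, |derivWithin f (Icc a b) x| ≤ K := by
  have hcont := (hf.continuousOn_derivWithin (uniqueDiffOn_Icc hab) le_rfl).abs
  rw [← closure_Ioo hab.ne] at hcont ⊢
  refine le_on_closure (fun x hx => ?_) hcont continuousOn_const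
  rw [closure_Ioo hab.ne, derivWithin_of_mem_nhds (Icc_mem_nhds hx.1 hx.2)]
  exact hK x hx

theorem ConvexOn.integral_sq_derivWithin_sub_le {u v : ℝ → ℝ} {Lu Lv : ℝ} (hab : a < b)
    (hu : ContDiffOn ℝ 2 u (Icc a b)) (hv : ContDiffOn ℝ 2 v (Icc a b))
    (hucvx : ConvexOn ℝ (Icc a b) u) (hvcvx : ConvexOn ℝ (Icc a b) v)
    (hLu : ∀ x ∈ Icc a b, |derivWithin u (Icc a b) x| ≤ Lu)
    (hLv : ∀ x ∈ Icc a b, |derivWithin v (Icc a b) x| ≤ Lv) :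
    ∫ x in a..b, (derivWithin u (Icc a b) x - derivWithin v (Icc a b) x) ^ 2 ≤
      8 * (Lu + Lv) ^ ((4 : ℝ) / 3) * (∫ x in a..b, (u x - v x) ^ 2) ^ ((1 : ℝ) / 3) := by
  have hI : UniqueDiffOn ℝ (Icc a b) := uniqueDiffOn_Icc hab
  have hderiv : ∀ {φ : ℝ → ℝ}, ContDiffOn ℝ 1 φ (Icc a b) →
      ∀ x ∈ Icc a b, HasDerivWithinAt φ (derivWithin φ (Icc a b) x) (Icc a b) x :=
    fun hφ x hx => (hφ.differentiableOn one_ne_zero x hx).hasDerivWithinAt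
  have hu1 : ContDiffOn ℝ 1 u (Icc a b) := hu.of_le one_le_two
  have hv1 : ContDiffOn ℝ 1 v (Icc a b) := hv.of_le one_le_two
  have hu' : ContDiffOn ℝ 1 (derivWithin u (Icc a b)) (Icc a b) := hu.derivWithin hI le_rfl
  have hv' : ContDiffOn ℝ 1 (derivWithin v (Icc a b)) (Icc a b) := hv.derivWithin hI le_rfl
  have hint : ∀ {φ : ℝ → ℝ}, ContDiffOn ℝ 1 φ (Icc a b) →
      IntervalIntegrable (derivWithin φ (Icc a b)) volume a b := fun hφ =>
    (hφ.continuousOn_derivWithin hI le_rfl).intervalIntegrable_of_Icc hab.le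
  refine integral_sq_sub_le_rpow_integral_sq hab.le
    (fun x hx => (hderiv hu1 x hx).sub (hderiv hv1 x hx))
    (hderiv hu') (hderiv hv') (hint hu') (hint hv') (fun x _ => ?_) (fun x _ => ?_) hLu hLv
  · exact (hucvx.monotoneOn_derivWithin (hu.differentiableOn two_ne_zero)).derivWithin_nonneg
  · exact (hvcvx.monotoneOn_derivWithin (hv.differentiableOn two_ne_zero)).derivWithin_nonneg

end Interpolation

/-- Gagliardo–Nirenberg type inequality for differences of convex functions in 1D:
if `u, v` are `C²` convex functions on `[a,b]` with derivatives bounded by `Lu, Lv`,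
then `‖u' - v'‖²_{L²} ≤ 8 (Lu + Lv)^{4/3} ‖u - v‖_{L²}^{2/3}`. -/
theorem stmt_0 (a b : ℝ) (hab : a ≤ b) (u v : ℝ → ℝ)
    (hu : ContDiffOn ℝ 2 u (Set.Icc a b)) (hv : ContDiffOn ℝ 2 v (Set.Icc a b))
    (hucvx : ConvexOn ℝ (Set.Icc a b) u) (hvcvx : ConvexOn ℝ (Set.Icc a b) v)
    (Lu Lv : ℝ)
    (hLu : ∀ x ∈ Set.Icc a b, |deriv u x| ≤ Lu)
    (hLv : ∀ x ∈ Set.Icc a b, |deriv v x| ≤ Lv) :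
    ∫ x in a..b, (deriv u x - deriv v x) ^ 2 ≤
      8 * (Lu + Lv) ^ ((4 : ℝ) / 3) * (∫ x in a..b, (u x - v x) ^ 2) ^ ((1 : ℝ) / 3) := by
  rcases hab.eq_or_lt with rfl | hab
  · simp
  have hderiv : ∀ (φ : ℝ → ℝ), ∀ x ∈ Ioo a b, derivWithin φ (Icc a b) x = deriv φ x :=
    fun φ x hx => derivWithin_of_mem_nhds (Icc_mem_nhds hx.1 hx.2)
  refine (integral_congr_Ioo_of_le hab.le fun x hx => ?_).trans_le
    (hucvx.integral_sq_derivWithin_sub_le hab hu hv hvcvx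
      (abs_derivWithin_Icc_le hab (hu.of_le one_le_two) fun x hx => hLu x (mem_Icc_of_Ioo hx))
      (abs_derivWithin_Icc_le hab (hv.of_le one_le_two) fun x hx => hLv x (mem_Icc_of_Ioo hx)))
  simp only [hderiv u x hx, hderiv v x hx]
end

section
/- Let 𝒳 ⊂ ℝᵈ be a compact convex set and φ : 𝒳 → ℝ a convex function such that |φ(x) - φ(x')| ≤ M_α ‖x - x'‖^α for all x, x' ∈ 𝒳, where M_α > 0 and α ∈ (0,1). Fix R > 0 and set η_R = (M_α / R)^{1/(1-α)}. Then for every x ∈ 𝒳 with dist(x, ∂𝒳) ≥ η_R, every subgradient g ∈ ∂φ(x) satisfies ‖g‖ ≤ R. In particular φ is R-Lipschitz on the erosion 𝒳_{-η_R} = {x ∈ 𝒳 : dist(x, ∂𝒳) ≥ η_R}. -/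
open Metric

/-! A subgradient `g` at `x` is tested against the point at distance `η` from `x` in the direction
of `g`, which stays in `𝒳` when `x` is `η`-deep: Hölder continuity gives
`η ‖g‖ ≤ M η^α`, i.e. `‖g‖ ≤ M η^(α-1)`, and this is `R` exactly for `η = η_R`.
For the Lipschitz bound, the segment from any `x ∈ 𝒳` to an `η`-deep point `y` is prolonged by `η`
beyond `y`; convexity along it and Hölder continuity at its far end bound the slope
`(φ y - φ x) / ‖y - x‖` by `M (‖y - x‖ + η)^(α-1) ≤ M η^(α-1)`. -/

lemma closedBall_infDist_frontier_subset {E : Type*} [NormedAddCommGroup E] [NormedSpace ℝ E]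
    [FiniteDimensional ℝ E] {s : Set E} (hs : IsClosed s) {x : E} (hx : x ∈ s) :
    closedBall x (infDist x (frontier s)) ⊆ s := by
  rcases eq_or_ne s Set.univ with rfl | hs_univ
  · exact Set.subset_univ _
  obtain ⟨y, hy, hxy⟩ := exists_mem_frontier_infDist_compl_eq_dist hx hs_univ
  have hle : infDist x (frontier s) ≤ infDist x sᶜ := hxy ▸ infDist_le_dist_of_mem hy
  calc closedBall x (infDist x (frontier s)) ⊆ closedBall x (infDist x sᶜ) :=
        closedBall_subset_closedBall hle
    _ ⊆ closure s := closedBall_infDist_compl_subset_closure hx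
    _ = s := hs.closure_eq

lemma ConvexOn.map_add_smul_sub_sub_le {E : Type*} [AddCommGroup E] [Module ℝ E] {s : Set E}
    {φ : E → ℝ} (hφ : ConvexOn ℝ s φ) {x z : E} (hx : x ∈ s) (hz : z ∈ s) {t : ℝ} (ht₀ : 0 ≤ t)
    (ht₁ : t ≤ 1) :
    φ (x + t • (z - x)) - φ x ≤ t * (φ z - φ x) := by
  have h := hφ.2 hx hz (sub_nonneg.2 ht₁) ht₀ (sub_add_cancel 1 t)
  have hpt : (1 - t) • x + t • z = x + t • (z - x) := by module
  rw [hpt, smul_eq_mul, smul_eq_mul] at h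
  linarith

section HolderBounds

variable {E : Type*} [NormedAddCommGroup E] {s : Set E} {φ : E → ℝ} {M α η : ℝ}

lemma norm_le_of_forall_le_add_inner_of_closedBall_subset [InnerProductSpace ℝ E] {x g : E}
    (hM : 0 ≤ M) (hη : 0 < η) (hball : closedBall x η ⊆ s)
    (hHolder : ∀ y ∈ s, φ y - φ x ≤ M * ‖y - x‖ ^ α)
    (hg : ∀ y ∈ s, φ x + inner ℝ g (y - x) ≤ φ y) :
    ‖g‖ ≤ M * η ^ (α - 1) := by
  rcases eq_or_ne g 0 with rfl | hg₀
  · rw [norm_zero]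
    positivity
  have hg_pos : 0 < ‖g‖ := norm_pos_iff.2 hg₀
  set y := x + (η / ‖g‖) • g
  have hyx : y - x = (η / ‖g‖) • g := add_sub_cancel_left x _
  have hnorm : ‖y - x‖ = η := by
    rw [hyx, norm_smul, Real.norm_of_nonneg (by positivity)]
    field_simp
  have hinner : inner ℝ g (y - x) = ‖g‖ * η := by
    rw [hyx, real_inner_smul_right, real_inner_self_eq_norm_sq]
    field_simp
  have hy : y ∈ s := hball (by rw [mem_closedBall, dist_eq_norm, hnorm])
  refine le_of_mul_le_mul_right ?_ hη
  calc ‖g‖ * η ≤ φ y - φ x := by linarith [hg y hy]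
    _ ≤ M * η ^ α := hnorm ▸ hHolder y hy
    _ = M * η ^ (α - 1) * η := by rw [Real.rpow_sub_one hη.ne']; field_simp

lemma ConvexOn.sub_le_mul_norm_of_closedBall_subset [NormedSpace ℝ E] (hφ : ConvexOn ℝ s φ)
    (hM : 0 ≤ M) (hα : α ≤ 1) (hη : 0 < η) {x y : E} (hx : x ∈ s) (hball : closedBall y η ⊆ s)
    (hHolder : ∀ z ∈ s, φ z - φ x ≤ M * ‖z - x‖ ^ α) :
    φ y - φ x ≤ M * η ^ (α - 1) * ‖y - x‖ := by
  rcases eq_or_ne y x with rfl | hyx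
  · simp
  set r := ‖y - x‖ with hr_def
  have hr : 0 < r := norm_pos_iff.2 (sub_ne_zero.2 hyx)
  set z := x + ((r + η) / r) • (y - x)
  have hzy : ‖z - y‖ = η := by
    have hzy' : z - y = (η / r) • (y - x) := by
      simp only [z]
      match_scalars <;> field_simp <;> ring
    rw [hzy', norm_smul, Real.norm_of_nonneg (by positivity), ← hr_def]
    field_simp
  have hzx : ‖z - x‖ = r + η := by
    rw [add_sub_cancel_left, norm_smul, Real.norm_of_nonneg (by positivity), ← hr_def]
    field_simp
  have hz : z ∈ s := hball (by rw [mem_closedBall, dist_eq_norm, hzy])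
  have hy : y = x + (r / (r + η)) • (z - x) := by
    simp only [z, add_sub_cancel_left, smul_smul]
    rw [div_mul_div_cancel₀ (by positivity), div_self hr.ne', one_smul, add_sub_cancel]
  calc φ y - φ x ≤ r / (r + η) * (φ z - φ x) := by
        rw [hy]
        exact hφ.map_add_smul_sub_sub_le hx hz (by positivity)
          (div_le_one_of_le₀ (by linarith) (by positivity) : r / (r + η) ≤ 1)
    _ ≤ r / (r + η) * (M * (r + η) ^ α) := by
        gcongr
        exact hzx ▸ hHolder z hz
    _ = M * (r + η) ^ (α - 1) * r := by
        rw [Real.rpow_sub_one (by positivity)]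
        field_simp
    _ ≤ M * η ^ (α - 1) * r := by
        have hpow : (r + η) ^ (α - 1) ≤ η ^ (α - 1) :=
          Real.rpow_le_rpow_of_nonpos hη (by linarith) (by linarith)
        gcongr

end HolderBounds

lemma mul_div_rpow_one_div_one_sub_rpow_sub_one {M R α : ℝ} (hM : 0 < M) (hR : 0 < R)
    (hα : α ≠ 1) :
    M * ((M / R) ^ (1 / (1 - α))) ^ (α - 1) = R := by
  have h1α : 1 - α ≠ 0 := sub_ne_zero.2 hα.symm
  rw [← Real.rpow_mul (by positivity), show 1 / (1 - α) * (α - 1) = -1 by field_simp; ring,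
    Real.rpow_neg_one, inv_div]
  field_simp

theorem stmt_5_general (d : ℕ) (𝒳 : Set (EuclideanSpace ℝ (Fin d)))
    (h𝒳c : IsCompact 𝒳)
    (φ : EuclideanSpace ℝ (Fin d) → ℝ) (hφ : ConvexOn ℝ 𝒳 φ)
    (Mα : ℝ) (hMα : 0 < Mα) (α : ℝ) (hα : α ∈ Set.Ioo (0 : ℝ) 1)
    (hHolder : ∀ x ∈ 𝒳, ∀ x' ∈ 𝒳, |φ x - φ x'| ≤ Mα * ‖x - x'‖ ^ α)
    (R : ℝ) (hR : 0 < R) (ηR : ℝ) (hηR : ηR = (Mα / R) ^ ((1 : ℝ) / (1 - α))) :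
    (∀ x ∈ 𝒳, ηR ≤ infDist x (frontier 𝒳) →
      ∀ g : EuclideanSpace ℝ (Fin d),
        (∀ y ∈ 𝒳, φ x + (inner ℝ g (y - x) : ℝ) ≤ φ y) → ‖g‖ ≤ R) ∧
    (∀ x ∈ 𝒳, ηR ≤ infDist x (frontier 𝒳) →
      ∀ x' ∈ 𝒳, ηR ≤ infDist x' (frontier 𝒳) →
        |φ x - φ x'| ≤ R * ‖x - x'‖) := by
  have hη : 0 < ηR := hηR ▸ by positivity
  have hMη : Mα * ηR ^ (α - 1) = R :=
    hηR ▸ mul_div_rpow_one_div_one_sub_rpow_sub_one hMα hR hα.2.ne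
  have hball : ∀ x ∈ 𝒳, ηR ≤ infDist x (frontier 𝒳) → closedBall x ηR ⊆ 𝒳 := fun x hx hxη =>
    (closedBall_subset_closedBall hxη).trans (closedBall_infDist_frontier_subset h𝒳c.isClosed hx)
  have hHolder' : ∀ x ∈ 𝒳, ∀ y ∈ 𝒳, φ y - φ x ≤ Mα * ‖y - x‖ ^ α := fun x hx y hy =>
    (le_abs_self _).trans (hHolder y hy x hx)
  have hslope : ∀ x ∈ 𝒳, ∀ y ∈ 𝒳, ηR ≤ infDist y (frontier 𝒳) → φ y - φ x ≤ R * ‖y - x‖ :=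
    fun x hx y hy hyη => hMη ▸ hφ.sub_le_mul_norm_of_closedBall_subset hMα.le hα.2.le hη hx
      (hball y hy hyη) (hHolder' x hx)
  refine ⟨fun x hx hxη g hg => hMη ▸ norm_le_of_forall_le_add_inner_of_closedBall_subset hMα.le
    hη (hball x hx hxη) (hHolder' x hx) hg, fun x hx hxη x' hx' hx'η => ?_⟩
  rw [abs_sub_le_iff, norm_sub_rev]
  exact ⟨norm_sub_rev x x' ▸ hslope x' hx' x hx hxη, hslope x hx x' hx' hx'η⟩

/-- Lipschitz bound on erosions for Hölder-continuous convex potentials: if `φ` is convex on a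
compact convex set `𝒳` and `α`-Hölder with constant `M_α`, then at any point whose distance to
`∂𝒳` is at least `η_R = (M_α/R)^{1/(1-α)}`, every subgradient has norm at most `R`; in
particular `φ` is `R`-Lipschitz on the erosion `𝒳_{-η_R}`. -/
theorem stmt_5 (d : ℕ) (𝒳 : Set (EuclideanSpace ℝ (Fin d)))
    (h𝒳c : IsCompact 𝒳) (h𝒳cvx : Convex ℝ 𝒳)
    (φ : EuclideanSpace ℝ (Fin d) → ℝ) (hφ : ConvexOn ℝ 𝒳 φ)
    (Mα : ℝ) (hMα : 0 < Mα) (α : ℝ) (hα : α ∈ Set.Ioo (0 : ℝ) 1)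
    (hHolder : ∀ x ∈ 𝒳, ∀ x' ∈ 𝒳, |φ x - φ x'| ≤ Mα * ‖x - x'‖ ^ α)
    (R : ℝ) (hR : 0 < R) (ηR : ℝ) (hηR : ηR = (Mα / R) ^ ((1 : ℝ) / (1 - α))) :
    (∀ x ∈ 𝒳, ηR ≤ infDist x (frontier 𝒳) →
      ∀ g : EuclideanSpace ℝ (Fin d),
        (∀ y ∈ 𝒳, φ x + (inner ℝ g (y - x) : ℝ) ≤ φ y) → ‖g‖ ≤ R) ∧
    (∀ x ∈ 𝒳, ηR ≤ infDist x (frontier 𝒳) →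
      ∀ x' ∈ 𝒳, ηR ≤ infDist x' (frontier 𝒳) →
        |φ x - φ x'| ≤ R * ‖x - x'‖) :=
  stmt_5_general d 𝒳 h𝒳c φ hφ Mα hMα α hα hHolder R hR ηR hηR
end

section
/- Let 𝒳 ⊂ ℝᵈ be a compact convex set containing the origin, and let r, R > 0 be such that B(0,r) ⊆ 𝒳 ⊆ B(0,R). Then for every ε > 0 and every unit vector u ∈ S^{d-1}, the radial functions satisfy 0 ≤ ρ_{𝒳₊ε}(u) - ρ_𝒳(u) ≤ (R/r) ε, where ρ_K(u) = max{λ ≥ 0 : λu ∈ K} and 𝒳₊ε = {x : dist(x, 𝒳) ≤ ε} is the ε-dilation. -/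
/-!
If `B(0, r) ⊆ K` with `K` convex, a point `x` within `ε` of some `y ∈ K` lies in
`(1 + ε/r) • K`: `x - y ∈ closedBall 0 ε = (ε/r) • closedBall 0 r ⊆ (ε/r) • K`, and
`K + (ε/r) • K = (1 + ε/r) • K` by convexity. Hence the `ε`-dilation of `K` has radial
function at most `(1 + ε/r) ρ_K`, and `(ε/r) ρ_K ≤ (ε/r) R` since `K ⊆ B(0, R)`.
-/

open Metric Pointwise

variable {E : Type*} [NormedAddCommGroup E] [NormedSpace ℝ E]

theorem Convex.mem_smul_of_dist_le {K : Set E} {r ε : ℝ} {x y : E} (hK : Convex ℝ K)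
    (hr : 0 < r) (hε : 0 ≤ ε) (hball : closedBall 0 r ⊆ K) (hy : y ∈ K)
    (hxy : dist x y ≤ ε) :
    x ∈ (1 + ε / r) • K := by
  have hεr : 0 ≤ ε / r := div_nonneg hε hr.le
  have hdiff : x - y ∈ (ε / r) • closedBall (0 : E) r := by
    rwa [smul_closedBall _ _ hr.le, smul_zero, Real.norm_of_nonneg hεr, div_mul_cancel₀ _ hr.ne',
      mem_closedBall_zero_iff, ← dist_eq_norm]
  rw [hK.add_smul zero_le_one hεr, one_smul]
  simpa using Set.add_mem_add hy (Set.smul_set_mono hball hdiff)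

theorem IsCompact.setOf_infDist_le_subset_smul {K : Set E} {r ε : ℝ} (hKc : IsCompact K)
    (hK : Convex ℝ K) (hr : 0 < r) (hε : 0 ≤ ε) (hball : closedBall 0 r ⊆ K) :
    {x | infDist x K ≤ ε} ⊆ (1 + ε / r) • K := by
  intro x hx
  obtain ⟨y, hy, hxy⟩ := hKc.exists_infDist_eq_dist ⟨0, hball (mem_closedBall_self hr.le)⟩ x
  exact hK.mem_smul_of_dist_le hr hε hball hy (hxy ▸ hx)

def radialSet (K : Set E) (u : E) : Set ℝ := {t | 0 ≤ t ∧ t • u ∈ K}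

noncomputable def radialFun (K : Set E) (u : E) : ℝ := sSup (radialSet K u)

section radialFun

variable {K L : Set E} {u : E} {t c R : ℝ}

theorem radialFun_nonneg : 0 ≤ radialFun K u := Real.sSup_nonneg fun _ ht => ht.1

theorem radialFun_mono (hL : BddAbove (radialSet L u)) (h : K ⊆ L) :
    radialFun K u ≤ radialFun L u := by
  rcases (radialSet K u).eq_empty_or_nonempty with hK | hK
  · rw [radialFun, hK, Real.sSup_empty]
    exact radialFun_nonneg
  · exact csSup_le_csSup hL hK fun t ht => ⟨ht.1, h ht.2⟩

theorem le_of_mem_radialSet_of_subset_closedBall (hK : K ⊆ closedBall 0 R) (hu : ‖u‖ = 1)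
    (ht : t ∈ radialSet K u) : t ≤ R := by
  have := hK ht.2
  rwa [mem_closedBall_zero_iff, norm_smul, hu, mul_one, Real.norm_of_nonneg ht.1] at this

theorem bddAbove_radialSet_of_subset_closedBall (hK : K ⊆ closedBall 0 R) (hu : ‖u‖ = 1) :
    BddAbove (radialSet K u) :=
  ⟨R, fun _ ht => le_of_mem_radialSet_of_subset_closedBall hK hu ht⟩

theorem radialFun_le_of_subset_closedBall (hR : 0 ≤ R) (hK : K ⊆ closedBall 0 R)
    (hu : ‖u‖ = 1) : radialFun K u ≤ R :=
  Real.sSup_le (fun _ ht => le_of_mem_radialSet_of_subset_closedBall hK hu ht) hR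

theorem le_of_mem_radialSet_of_subset_smul (hK : BddAbove (radialSet K u)) (hc : 0 < c)
    (hL : L ⊆ c • K) (ht : t ∈ radialSet L u) : t ≤ c * radialFun K u := by
  have hmem : c⁻¹ * t ∈ radialSet K u :=
    ⟨mul_nonneg (inv_nonneg.2 hc.le) ht.1, by
      rw [mul_smul]
      exact (Set.mem_smul_set_iff_inv_smul_mem₀ hc.ne' _ _).1 (hL ht.2)⟩
  rw [← inv_mul_le_iff₀ hc]
  exact le_csSup hK hmem

theorem bddAbove_radialSet_of_subset_smul (hK : BddAbove (radialSet K u)) (hc : 0 < c)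
    (hL : L ⊆ c • K) : BddAbove (radialSet L u) :=
  ⟨_, fun _ ht => le_of_mem_radialSet_of_subset_smul hK hc hL ht⟩

theorem radialFun_le_of_subset_smul (hK : BddAbove (radialSet K u)) (hc : 0 < c)
    (hL : L ⊆ c • K) : radialFun L u ≤ c * radialFun K u :=
  Real.sSup_le (fun _ ht => le_of_mem_radialSet_of_subset_smul hK hc hL ht)
    (mul_nonneg hc.le radialFun_nonneg)

end radialFun

theorem stmt_6_general (d : ℕ) (𝒳 : Set (EuclideanSpace ℝ (Fin d)))
    (h𝒳c : IsCompact 𝒳) (h𝒳cvx : Convex ℝ 𝒳)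
    (r R : ℝ) (hr : 0 < r) (hR : 0 < R)
    (hrX : closedBall (0 : EuclideanSpace ℝ (Fin d)) r ⊆ 𝒳)
    (hXR : 𝒳 ⊆ closedBall (0 : EuclideanSpace ℝ (Fin d)) R)
    (ε : ℝ) (hε : 0 < ε) (u : EuclideanSpace ℝ (Fin d)) (hu : ‖u‖ = 1)
    (𝒳ε : Set (EuclideanSpace ℝ (Fin d))) (h𝒳ε : 𝒳ε = {x | infDist x 𝒳 ≤ ε})
    (radX radXε : ℝ)
    (hradX : radX = sSup {lam : ℝ | 0 ≤ lam ∧ lam • u ∈ 𝒳})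
    (hradXε : radXε = sSup {lam : ℝ | 0 ≤ lam ∧ lam • u ∈ 𝒳ε}) :
    0 ≤ radXε - radX ∧ radXε - radX ≤ (R / r) * ε := by
  change radX = radialFun 𝒳 u at hradX
  change radXε = radialFun 𝒳ε u at hradXε
  have hc : 0 < 1 + ε / r := by positivity
  have hdil : 𝒳ε ⊆ (1 + ε / r) • 𝒳 :=
    h𝒳ε ▸ h𝒳c.setOf_infDist_le_subset_smul h𝒳cvx hr hε.le hrX
  have h𝒳𝒳ε : 𝒳 ⊆ 𝒳ε := fun _ hx =>
    h𝒳ε ▸ (infDist_zero_of_mem hx).trans_le hε.le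
  have hbdd := bddAbove_radialSet_of_subset_closedBall hXR hu
  have hlower : radX ≤ radXε :=
    hradX ▸ hradXε ▸
      radialFun_mono (bddAbove_radialSet_of_subset_smul hbdd hc hdil) h𝒳𝒳ε
  have hupper : radXε ≤ (1 + ε / r) * radX :=
    hradX ▸ hradXε ▸ radialFun_le_of_subset_smul hbdd hc hdil
  have hradXR : radX ≤ R := hradX ▸ radialFun_le_of_subset_closedBall hR.le hXR hu
  refine ⟨sub_nonneg.2 hlower, ?_⟩
  calc radXε - radX ≤ ε / r * radX := by linarith
    _ ≤ ε / r * R := by gcongr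
    _ = R / r * ε := by ring

/-- Radial function of the dilation: if `B(0,r) ⊆ 𝒳 ⊆ B(0,R)` with `𝒳` compact convex
containing the origin, then for every `ε > 0` and unit vector `u`,
`0 ≤ ρ_{𝒳₊ε}(u) - ρ_𝒳(u) ≤ (R/r) ε`, where `ρ_K(u) = max {λ ≥ 0 : λ u ∈ K}` and
`𝒳₊ε = {x : dist(x, 𝒳) ≤ ε}` is the `ε`-dilation. -/
theorem stmt_6 (d : ℕ) (𝒳 : Set (EuclideanSpace ℝ (Fin d)))
    (h𝒳c : IsCompact 𝒳) (h𝒳cvx : Convex ℝ 𝒳) (h0 : (0 : EuclideanSpace ℝ (Fin d)) ∈ 𝒳)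
    (r R : ℝ) (hr : 0 < r) (hR : 0 < R)
    (hrX : closedBall (0 : EuclideanSpace ℝ (Fin d)) r ⊆ 𝒳)
    (hXR : 𝒳 ⊆ closedBall (0 : EuclideanSpace ℝ (Fin d)) R)
    (ε : ℝ) (hε : 0 < ε) (u : EuclideanSpace ℝ (Fin d)) (hu : ‖u‖ = 1)
    (𝒳ε : Set (EuclideanSpace ℝ (Fin d))) (h𝒳ε : 𝒳ε = {x | infDist x 𝒳 ≤ ε})
    (radX radXε : ℝ)
    (hradX : radX = sSup {lam : ℝ | 0 ≤ lam ∧ lam • u ∈ 𝒳})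
    (hradXε : radXε = sSup {lam : ℝ | 0 ≤ lam ∧ lam • u ∈ 𝒳ε}) :
    0 ≤ radXε - radX ∧ radXε - radX ≤ (R / r) * ε :=
  stmt_6_general d 𝒳 h𝒳c h𝒳cvx r R hr hR hrX hXR ε hε u hu 𝒳ε h𝒳ε radX radXε hradX hradXε
end

section
/- Let 𝒳 ⊂ ℝᵈ be a compact convex set containing the origin, and let r_𝒳, R_𝒳 > 0 be such that B(0, r_𝒳) ⊆ 𝒳 ⊆ B(0, R_𝒳). Then for all ε ∈ [0, r_𝒳), the volume of the boundary slice satisfies vol(𝒳 \ 𝒳_{-ε}) ≤ S_{d-1} (R_𝒳 + r_𝒳)^{d-1} (R_𝒳 / r_𝒳) ε, where 𝒳_{-ε} = {x ∈ 𝒳 : dist(x, ∂𝒳) ≥ ε} and S_{d-1} is the surface area of the unit (d-1)-sphere. -/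
/-!
Put `t = ε / r`. By convexity, for `x ∈ 𝒳` the ball of radius `t r = ε` around `(1 - t) x` lies in
`(1 - t) x + t B(0, r) ⊆ 𝒳`, so the homothetic copy `(1 - t) 𝒳` lies in the erosion `𝒳_{-ε}`.
Hence `vol(𝒳 \ 𝒳_{-ε}) ≤ (1 - (1 - t)^d) vol 𝒳 ≤ d t R^d vol(B(0, 1))` by Bernoulli's inequality.
-/

open Metric MeasureTheory Pointwise Set Module

def erosion {X : Type*} [PseudoMetricSpace X] (s : Set X) (ε : ℝ) : Set X :=
  {x ∈ s | ε ≤ infDist x (frontier s)}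

lemma one_sub_one_sub_pow_le {R : Type*} [Ring R] [LinearOrder R] [IsStrictOrderedRing R]
    {t : R} (ht : t ≤ 2) (n : ℕ) : 1 - (1 - t) ^ n ≤ n * t := by
  have := one_add_mul_le_pow (neg_le_neg ht) n
  rw [mul_neg, ← sub_eq_add_neg, ← sub_eq_add_neg] at this
  exact sub_le_comm.1 this

theorem le_infDist_frontier_of_ball_subset {X : Type*} [PseudoMetricSpace X] {s : Set X} {x : X}
    {δ : ℝ} (hfr : (frontier s).Nonempty) (h : ball x δ ⊆ s) : δ ≤ infDist x (frontier s) :=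
  (le_infDist hfr).2 fun _ hy ↦ not_lt.1 fun hlt ↦
    hy.2 (isOpen_ball.subset_interior_iff.2 h (mem_ball'.2 hlt))

section NormedSpace

variable {E : Type*} [NormedAddCommGroup E] [NormedSpace ℝ E] {s : Set E}

theorem Bornology.IsBounded.frontier_nonempty [Nontrivial E] (hb : Bornology.IsBounded s)
    (hne : s.Nonempty) : (frontier s).Nonempty :=
  nonempty_frontier_iff.2 ⟨hne, fun h ↦ NormedSpace.unbounded_univ ℝ E (h ▸ hb)⟩

theorem Convex.closedBall_one_sub_smul_subset {r t : ℝ} {x : E} (hs : Convex ℝ s) (hr : 0 ≤ r)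
    (hrs : closedBall 0 r ⊆ s) (hx : x ∈ s) (ht0 : 0 ≤ t) (ht1 : t ≤ 1) :
    closedBall ((1 - t) • x) (t * r) ⊆ s :=
  calc closedBall ((1 - t) • x) (t * r) = (1 - t) • {x} + t • closedBall 0 r := by
        rw [smul_closedBall t 0 hr, smul_zero, Real.norm_of_nonneg ht0, smul_set_singleton,
          singleton_add_closedBall_zero]
    _ ⊆ (1 - t) • s + t • s := by gcongr; exact singleton_subset_iff.2 hx
    _ ⊆ s := hs.set_combo_subset (by linarith) ht0 (by ring)

theorem Convex.smul_subset_erosion {r ε : ℝ} (hs : Convex ℝ s) (hfr : (frontier s).Nonempty)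
    (hrs : closedBall 0 r ⊆ s) (hr : 0 < r) (hε : 0 ≤ ε) (hεr : ε ≤ r) :
    (1 - ε / r) • s ⊆ erosion s ε := by
  rintro _ ⟨x, hx, rfl⟩
  have hball : closedBall ((1 - ε / r) • x) ε ⊆ s := by
    simpa only [div_mul_cancel₀ ε hr.ne'] using hs.closedBall_one_sub_smul_subset hr.le hrs hx
      (div_nonneg hε hr.le) (div_le_one_of_le₀ hεr hr.le)
  exact ⟨hball (mem_closedBall_self hε),
    le_infDist_frontier_of_ball_subset hfr (ball_subset_closedBall.trans hball)⟩

variable [MeasurableSpace E] [BorelSpace E] [FiniteDimensional ℝ E] (μ : Measure E)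
  [μ.IsAddHaarMeasure]

theorem Convex.addHaar_real_sdiff_smul {c : ℝ} (hs : Convex ℝ s) (h0 : (0 : E) ∈ s)
    (hfin : μ s ≠ ⊤) (hc0 : 0 ≤ c) (hc1 : c ≤ 1) :
    μ.real (s \ c • s) = (1 - c ^ finrank ℝ E) * μ.real s := by
  have hsub : c • s ⊆ s := by
    rintro _ ⟨x, hx, rfl⟩
    exact hs.smul_mem_of_zero_mem h0 hx ⟨hc0, hc1⟩
  have hsmul : μ.real (c • s) = c ^ finrank ℝ E * μ.real s := by
    rw [measureReal_def, Measure.addHaar_smul, abs_of_nonneg (pow_nonneg hc0 _),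
      ENNReal.toReal_mul, ENNReal.toReal_ofReal (pow_nonneg hc0 _), measureReal_def]
  rw [measureReal_def, measure_sdiff hsub ((hs.smul c).nullMeasurableSet μ)
    (measure_ne_top_of_subset hsub hfin), ENNReal.toReal_sub_of_le (measure_mono hsub) hfin,
    ← measureReal_def, ← measureReal_def, hsmul]
  ring

end NormedSpace

theorem stmt_7_general (d : ℕ) (hd : 1 ≤ d) (𝒳 : Set (EuclideanSpace ℝ (Fin d)))
    (h𝒳cvx : Convex ℝ 𝒳) (h0 : (0 : EuclideanSpace ℝ (Fin d)) ∈ 𝒳)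
    (r R : ℝ) (hr : 0 < r)
    (hrX : closedBall (0 : EuclideanSpace ℝ (Fin d)) r ⊆ 𝒳)
    (hXR : 𝒳 ⊆ closedBall (0 : EuclideanSpace ℝ (Fin d)) R)
    (ε : ℝ) (hε : 0 ≤ ε) (hεr : ε < r)
    (𝒳ero : Set (EuclideanSpace ℝ (Fin d)))
    (h𝒳ero : 𝒳ero = {x ∈ 𝒳 | ε ≤ infDist x (frontier 𝒳)})
    (S : ℝ) (hS : S = d * (volume (ball (0 : EuclideanSpace ℝ (Fin d)) 1)).toReal) :
    (volume (𝒳 \ 𝒳ero)).toReal ≤ S * (R + r) ^ (d - 1) * (R / r) * ε := by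
  have : Nonempty (Fin d) := ⟨⟨0, hd⟩⟩
  have hdim : finrank ℝ (EuclideanSpace ℝ (Fin d)) = d := finrank_euclideanSpace_fin
  have hR : 0 ≤ R := nonempty_closedBall.1 ⟨0, hXR h0⟩
  have hfin : volume 𝒳 ≠ ⊤ := ne_top_of_le_ne_top measure_closedBall_lt_top.ne (measure_mono hXR)
  have hfr : (frontier 𝒳).Nonempty := (isBounded_closedBall.subset hXR).frontier_nonempty ⟨0, h0⟩
  have hvol : volume.real 𝒳 ≤ R ^ d * volume.real (ball (0 : EuclideanSpace ℝ (Fin d)) 1) := by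
    have := measureReal_mono (μ := volume) hXR measure_closedBall_lt_top.ne
    rwa [Measure.addHaar_real_closedBall volume 0 hR, hdim] at this
  have hero : (1 - ε / r) • 𝒳 ⊆ 𝒳ero := h𝒳ero ▸ h𝒳cvx.smul_subset_erosion hfr hrX hr hε hεr.le
  have ht0 : 0 ≤ ε / r := div_nonneg hε hr.le
  have ht1 : ε / r ≤ 1 := div_le_one_of_le₀ hεr.le hr.le
  simp only [hS, ← measureReal_def]
  calc volume.real (𝒳 \ 𝒳ero) ≤ volume.real (𝒳 \ (1 - ε / r) • 𝒳) :=
        measureReal_mono (sdiff_subset_sdiff_right hero)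
          (measure_ne_top_of_subset sdiff_subset hfin)
    _ = (1 - (1 - ε / r) ^ d) * volume.real 𝒳 := by
        rw [h𝒳cvx.addHaar_real_sdiff_smul volume h0 hfin (by linarith) (by linarith), hdim]
    _ ≤ d * (ε / r) * (R ^ d * volume.real (ball (0 : EuclideanSpace ℝ (Fin d)) 1)) := by
        gcongr
        exact one_sub_one_sub_pow_le (by linarith) d
    _ = d * volume.real (ball (0 : EuclideanSpace ℝ (Fin d)) 1) * R ^ (d - 1) * (R / r) * ε := by
        rw [← pow_sub_one_mul (by omega : d ≠ 0)]
        ring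
    _ ≤ _ := by gcongr; linarith

/-- Volume of boundary slices of a convex body: if `B(0,r) ⊆ 𝒳 ⊆ B(0,R)`, then for
`0 ≤ ε < r`, `vol(𝒳 \ 𝒳_{-ε}) ≤ S_{d-1} (R + r)^{d-1} (R/r) ε`, where
`𝒳_{-ε} = {x ∈ 𝒳 : dist(x, ∂𝒳) ≥ ε}` and `S_{d-1} = d · vol(B(0,1))` is the surface area
of the unit sphere. -/
theorem stmt_7 (d : ℕ) (hd : 1 ≤ d) (𝒳 : Set (EuclideanSpace ℝ (Fin d)))
    (h𝒳c : IsCompact 𝒳) (h𝒳cvx : Convex ℝ 𝒳) (h0 : (0 : EuclideanSpace ℝ (Fin d)) ∈ 𝒳)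
    (r R : ℝ) (hr : 0 < r) (hR : 0 < R)
    (hrX : closedBall (0 : EuclideanSpace ℝ (Fin d)) r ⊆ 𝒳)
    (hXR : 𝒳 ⊆ closedBall (0 : EuclideanSpace ℝ (Fin d)) R)
    (ε : ℝ) (hε : 0 ≤ ε) (hεr : ε < r)
    (𝒳ero : Set (EuclideanSpace ℝ (Fin d)))
    (h𝒳ero : 𝒳ero = {x ∈ 𝒳 | ε ≤ infDist x (frontier 𝒳)})
    (S : ℝ) (hS : S = d * (volume (ball (0 : EuclideanSpace ℝ (Fin d)) 1)).toReal) :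
    (volume (𝒳 \ 𝒳ero)).toReal ≤ S * (R + r) ^ (d - 1) * (R / r) * ε :=
  stmt_7_general d hd 𝒳 h𝒳cvx h0 r R hr hrX hXR ε hε hεr 𝒳ero h𝒳ero S hS
end
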